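/- Decay for the local ε-Milne problem (Theorem 'Milne theorem 2′'): Let K > 0 and M > 0. There exist ε₀ ∈ (0,1), K₀ ∈ (0, min(K, 1/2)] and C > 0, depending only on R₁, R₂, n, K and M, such that for every ε ∈ (0, ε₀] the following holds: if W ∈ C¹(D) satisfies sin φ · ∂W/∂η + F(η,ψ) cos φ · ∂W/∂φ + W = S at every interior point of D, W(0,φ,ψ) = h(φ,ψ) whenever sin φ > 0, and W(L,φ,ψ) = W(L,−φ,ψ), where |h| ≤ M on {sin φ > 0} and e^{Kη}|S| ≤ M on D, then ‖e^{K₀η} W‖_{L²} + ‖e^{K₀η} W‖_{L∞} ≤ C. -/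

import Mathlib

noncomputable section

open Real Set MeasureTheory

namespace MilneStmt

/-- The boundary-layer thickness `L = ε^(-n)`. -/
def layerL (ε n : ℝ) : ℝ := ε ^ (-n)

/-- The geometric force `F(η,ψ)`. -/
def force (R₁ R₂ ε η ψ : ℝ) : ℝ :=
  -ε * (Real.sin ψ ^ 2 / (R₁ - ε * η) + Real.cos ψ ^ 2 / (R₂ - ε * η))

/-- The domain `D = [0,L] × [-π/2, π/2] × [-π, π]` of the variables `(η, φ, ψ)`. -/
def milneDomain (L : ℝ) : Set (ℝ × ℝ × ℝ) :=
  Icc (0 : ℝ) L ×ˢ Icc (-(π / 2)) (π / 2) ×ˢ Icc (-π) π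

/-- The in-flow set `{(φ,ψ) : sin φ > 0, ψ ∈ [-π,π]}` (with `φ` in the velocity range). -/
def inflowSet : Set (ℝ × ℝ) :=
  {q | 0 < Real.sin q.1 ∧ q.1 ∈ Icc (-(π / 2)) (π / 2) ∧ q.2 ∈ Icc (-π) π}

/-- The angular average `f̄(η)`. -/
def angAvg (f : ℝ × ℝ × ℝ → ℝ) (η : ℝ) : ℝ :=
  (1 / (4 * π)) * ∫ ψ in (-π)..π, ∫ φ in (-(π / 2))..(π / 2), f (η, φ, ψ) * Real.cos φ

/-- Partial derivative in `η`. -/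
def dEta (g : ℝ × ℝ × ℝ → ℝ) (p : ℝ × ℝ × ℝ) : ℝ :=
  deriv (fun t => g (t, p.2.1, p.2.2)) p.1

/-- Partial derivative in `φ`. -/
def dPhi (g : ℝ × ℝ × ℝ → ℝ) (p : ℝ × ℝ × ℝ) : ℝ :=
  deriv (fun t => g (p.1, t, p.2.2)) p.2.1

/-- Partial derivative in `ψ`. -/
def dPsi (g : ℝ × ℝ × ℝ → ℝ) (p : ℝ × ℝ × ℝ) : ℝ :=
  deriv (fun t => g (p.1, p.2.1, t)) p.2.2

/-- A classical solution of the ε-Milne problem with geometric correction,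
with in-flow data `h` and source `S`. -/
structure IsMilneSolution (R₁ R₂ ε n : ℝ) (h : ℝ → ℝ → ℝ) (S : ℝ × ℝ × ℝ → ℝ)
    (f : ℝ × ℝ × ℝ → ℝ) : Prop where
  smooth : ContDiffOn ℝ 1 f (milneDomain (layerL ε n))
  eqn : ∀ p ∈ interior (milneDomain (layerL ε n)),
    Real.sin p.2.1 * dEta f p + force R₁ R₂ ε p.1 p.2.2 * Real.cos p.2.1 * dPhi f p
      + f p - angAvg f p.1 = S p
  inflow : ∀ q ∈ inflowSet, f (0, q.1, q.2) = h q.1 q.2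
  reflect : ∀ φ ψ : ℝ, f (layerL ε n, φ, ψ) = f (layerL ε n, -φ, ψ)

/-- The weighted `L²` norm on `D`. -/
def l2Norm (L : ℝ) (g : ℝ × ℝ × ℝ → ℝ) : ℝ :=
  Real.sqrt (∫ η in (0 : ℝ)..L, ∫ ψ in (-π)..π, ∫ φ in (-(π / 2))..(π / 2),
    g (η, φ, ψ) ^ 2 * Real.cos φ)

/-- The `L^∞` norm (sup over `D`). -/
def linfNorm (L : ℝ) (g : ℝ × ℝ × ℝ → ℝ) : ℝ :=
  ⨆ p ∈ milneDomain L, |g p|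

/-- The `L^∞` norm over the in-flow boundary. -/
def inflowLinf (g : ℝ → ℝ → ℝ) : ℝ :=
  ⨆ q ∈ inflowSet, |g q.1 q.2|

/-- The limit value `f_L = (3/(4π)) ∫∫ f(L,φ,ψ) sin²φ cos φ dφ dψ`. -/
def limitValue (L : ℝ) (f : ℝ × ℝ × ℝ → ℝ) : ℝ :=
  (3 / (4 * π)) * ∫ ψ in (-π)..π, ∫ φ in (-(π / 2))..(π / 2),
    f (L, φ, ψ) * Real.sin φ ^ 2 * Real.cos φ

/-- The data bounds with constants `K` and `M` for in-flow data `h` and source `S`. -/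
structure DataBounds (K M L : ℝ) (h : ℝ → ℝ → ℝ) (S : ℝ × ℝ × ℝ → ℝ) : Prop where
  hSmooth : ContDiffOn ℝ 1 (fun q : ℝ × ℝ => h q.1 q.2) inflowSet
  hBound : ∀ q ∈ inflowSet,
    |h q.1 q.2| + |deriv (fun t => h t q.2) q.1| + |deriv (fun t => h q.1 t) q.2| ≤ M
  sSmooth : ContDiffOn ℝ 1 S (milneDomain L)
  sBound : ∀ p ∈ milneDomain L,
    Real.exp (K * p.1) * (|S p| + |dEta S p| + |dPhi S p| + |dPsi S p|) ≤ M


/-!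
Put `g = e^{Kη} W` and take a maximum point of `g` on the closed domain; thanks to the specular
reflection at `η = L` it can be chosen off the out-flow part of that face. On the in-flow part of
`η = 0` we have `g = h`. At any other point the backward characteristic `-(sin φ, F cos φ, 0)`
points into the domain (its `φ`-component vanishes where `cos φ = 0`), so the derivative of `g`
along it is nonpositive, and this gives `g (1 - K sin φ) ≤ e^{Kη} S ≤ M`, the equation being
extended from the interior to the boundary by continuity. Hence `|e^{Kη} W| ≤ 2M` for `|K| ≤ 1/2`,
and with half the exponent the remaining factor `e^{-Kη/2}` bounds both norms.
-/

open Filter Topology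

lemma interior_milneDomain (L : ℝ) :
    interior (milneDomain L) = Ioo 0 L ×ˢ Ioo (-(π / 2)) (π / 2) ×ˢ Ioo (-π) π := by
  rw [milneDomain, interior_prod_eq, interior_prod_eq, interior_Icc, interior_Icc, interior_Icc]

lemma closure_interior_milneDomain {L : ℝ} (hL : 0 < L) :
    closure (interior (milneDomain L)) = milneDomain L := by
  have hπ := pi_pos
  rw [interior_milneDomain, milneDomain, closure_prod_eq, closure_prod_eq, closure_Ioo hL.ne,
    closure_Ioo (by linarith), closure_Ioo (by linarith)]

lemma isCompact_milneDomain (L : ℝ) : IsCompact (milneDomain L) :=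
  isCompact_Icc.prod (isCompact_Icc.prod isCompact_Icc)

lemma uniqueDiffOn_milneDomain {L : ℝ} (hL : 0 < L) : UniqueDiffOn ℝ (milneDomain L) :=
  (uniqueDiffOn_Icc hL).prod ((uniqueDiffOn_Icc (by linarith [pi_pos])).prod
    (uniqueDiffOn_Icc (by linarith [pi_pos])))

lemma eventually_le_sub_mul {a x v : ℝ} (hx : a ≤ x) (ha : x = a → v ≤ 0) :
    ∀ᶠ t in 𝓝[>] (0 : ℝ), a ≤ x - t * v := by
  rcases le_or_gt v 0 with hv | hv
  · filter_upwards [self_mem_nhdsWithin] with t (ht : 0 < t)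
    nlinarith
  · have hax : a < x := hx.lt_of_ne fun h => (ha h.symm).not_gt hv
    have hlim : Tendsto (fun t : ℝ => x - t * v) (𝓝[>] 0) (𝓝 x) := by
      refine tendsto_nhdsWithin_of_tendsto_nhds ?_
      simpa using (by fun_prop : Continuous fun t : ℝ => x - t * v).tendsto 0
    exact hlim.eventually (eventually_ge_nhds hax)

lemma eventually_sub_mul_mem_Icc {a b x v : ℝ} (hx : x ∈ Icc a b) (ha : x = a → v ≤ 0)
    (hb : x = b → 0 ≤ v) : ∀ᶠ t in 𝓝[>] (0 : ℝ), x - t * v ∈ Icc a b := by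
  have hupper := eventually_le_sub_mul (v := -v) (neg_le_neg hx.2)
    (fun h => neg_nonpos.2 (hb (neg_inj.1 h)))
  filter_upwards [eventually_le_sub_mul hx.1 ha, hupper] with t hlo hhi
  exact ⟨hlo, by linarith⟩

lemma neg_mem_posTangentConeAt_milneDomain {L : ℝ} {p : ℝ × ℝ × ℝ} (hp : p ∈ milneDomain L)
    (hin : ¬(p.1 = 0 ∧ 0 < sin p.2.1)) (hout : ¬(p.1 = L ∧ sin p.2.1 < 0)) (c : ℝ) :
    -((sin p.2.1, c * cos p.2.1, 0) : ℝ × ℝ × ℝ) ∈ posTangentConeAt (milneDomain L) p := by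
  obtain ⟨hη, hφ, hψ⟩ := hp
  refine mem_posTangentConeAt_of_frequently_mem (Eventually.frequently ?_)
  have hηt := eventually_sub_mul_mem_Icc hη (fun h => not_lt.1 fun hs => hin ⟨h, hs⟩)
    (fun h => not_lt.1 fun hs => hout ⟨h, hs⟩)
  have hcos : ∀ x, x = -(π / 2) ∨ x = π / 2 → c * cos x = 0 := by
    rintro x (rfl | rfl) <;> simp
  have hφt := eventually_sub_mul_mem_Icc hφ (fun h => (hcos _ (.inl h)).le)
    (fun h => (hcos _ (.inr h)).ge)
  filter_upwards [hηt, hφt] with t h1 h2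
  exact ⟨by simpa [sub_eq_add_neg] using h1, by simpa [sub_eq_add_neg] using h2, by simpa using hψ⟩

def charDir (R₁ R₂ ε : ℝ) (p : ℝ × ℝ × ℝ) : ℝ × ℝ × ℝ :=
  (sin p.2.1, force R₁ R₂ ε p.1 p.2.2 * cos p.2.1, 0)

/-- `sin φ ∂_η W + F cos φ ∂_φ W`, with the derivative taken within the closed domain so that it
is defined, and continuous, up to the boundary. -/
def transport (R₁ R₂ ε L : ℝ) (W : ℝ × ℝ × ℝ → ℝ) (p : ℝ × ℝ × ℝ) : ℝ :=
  fderivWithin ℝ W (milneDomain L) p (charDir R₁ R₂ ε p)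

structure IsLocalMilneSolution (R₁ R₂ ε L : ℝ) (h : ℝ → ℝ → ℝ) (S W : ℝ × ℝ × ℝ → ℝ) :
    Prop where
  contDiffOn : ContDiffOn ℝ 1 W (milneDomain L)
  eqn : ∀ p ∈ interior (milneDomain L),
    sin p.2.1 * dEta W p + force R₁ R₂ ε p.1 p.2.2 * cos p.2.1 * dPhi W p + W p = S p
  inflow : ∀ q ∈ inflowSet, W (0, q.1, q.2) = h q.1 q.2
  reflect : ∀ φ ψ : ℝ, W (L, φ, ψ) = W (L, -φ, ψ)

lemma transport_eq_of_mem_interior {R₁ R₂ ε L : ℝ} {W : ℝ × ℝ × ℝ → ℝ} {p : ℝ × ℝ × ℝ}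
    (hW : DifferentiableAt ℝ W p) (hp : p ∈ interior (milneDomain L)) :
    transport R₁ R₂ ε L W p
      = sin p.2.1 * dEta W p + force R₁ R₂ ε p.1 p.2.2 * cos p.2.1 * dPhi W p := by
  have hη : HasDerivAt (fun t : ℝ => ((t, p.2.1, p.2.2) : ℝ × ℝ × ℝ)) (1, 0, 0) p.1 :=
    (hasDerivAt_id _).prodMk (hasDerivAt_const _ _)
  have hφ : HasDerivAt (fun t : ℝ => ((p.1, t, p.2.2) : ℝ × ℝ × ℝ)) (0, 1, 0) p.2.1 :=
    (hasDerivAt_const _ _).prodMk ((hasDerivAt_id _).prodMk (hasDerivAt_const _ _))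
  have hdir : charDir R₁ R₂ ε p
      = sin p.2.1 • ((1, 0, 0) : ℝ × ℝ × ℝ)
        + (force R₁ R₂ ε p.1 p.2.2 * cos p.2.1) • (0, 1, 0) := by
    simp [charDir]
  have hdη : dEta W p = fderiv ℝ W p (1, 0, 0) := (hW.hasFDerivAt.comp_hasDerivAt _ hη).deriv
  have hdφ : dPhi W p = fderiv ℝ W p (0, 1, 0) := (hW.hasFDerivAt.comp_hasDerivAt _ hφ).deriv
  rw [transport, fderivWithin_of_mem_nhds (mem_interior_iff_mem_nhds.1 hp), hdir, map_add,
    map_smul, map_smul, hdη, hdφ, smul_eq_mul, smul_eq_mul]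

lemma continuousOn_force {R₁ R₂ ε L : ℝ} (hε : 0 ≤ ε) (h₁ : ε * L < R₁) (h₂ : ε * L < R₂) :
    ContinuousOn (fun p : ℝ × ℝ × ℝ => force R₁ R₂ ε p.1 p.2.2) (milneDomain L) := by
  have hlt : ∀ p ∈ milneDomain L, ε * p.1 ≤ ε * L := fun p hp =>
    mul_le_mul_of_nonneg_left hp.1.2 hε
  unfold force
  refine continuousOn_const.mul (.add ?_ ?_) <;>
    refine .div (by fun_prop) (by fun_prop) fun p hp => ?_ <;> linarith [hlt p hp]

lemma continuousOn_transport {R₁ R₂ ε L : ℝ} {W : ℝ × ℝ × ℝ → ℝ} (hL : 0 < L)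
    (hW : ContDiffOn ℝ 1 W (milneDomain L))
    (hF : ContinuousOn (fun p : ℝ × ℝ × ℝ => force R₁ R₂ ε p.1 p.2.2) (milneDomain L)) :
    ContinuousOn (transport R₁ R₂ ε L W) (milneDomain L) := by
  refine (hW.continuousOn_fderivWithin (uniqueDiffOn_milneDomain hL) le_rfl).clm_apply ?_
  exact (continuous_sin.comp (continuous_fst.comp continuous_snd)).continuousOn.prodMk
    ((hF.mul (continuous_cos.comp (continuous_fst.comp continuous_snd)).continuousOn).prodMk
      continuousOn_const)

lemma exists_isMaxOn_not_outflow {L : ℝ} (hL : 0 ≤ L) {g : ℝ × ℝ × ℝ → ℝ}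
    (hg : ContinuousOn g (milneDomain L)) (hrefl : ∀ φ ψ, g (L, φ, ψ) = g (L, -φ, ψ)) :
    ∃ p ∈ milneDomain L, IsMaxOn g (milneDomain L) p ∧ ¬(p.1 = L ∧ sin p.2.1 < 0) := by
  have h0 : ((0, 0, 0) : ℝ × ℝ × ℝ) ∈ milneDomain L := by
    have := pi_pos
    exact ⟨⟨le_rfl, hL⟩, ⟨by linarith, by linarith⟩, ⟨by linarith, by linarith⟩⟩
  obtain ⟨⟨η, φ, ψ⟩, hp, hmax⟩ := (isCompact_milneDomain L).exists_isMaxOn ⟨_, h0⟩ hg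
  by_cases hout : η = L ∧ sin φ < 0
  · obtain ⟨rfl, hsin⟩ := hout
    have hq : ((η, -φ, ψ) : ℝ × ℝ × ℝ) ∈ milneDomain η :=
      ⟨hp.1, ⟨by linarith [hp.2.1.2], by linarith [hp.2.1.1]⟩, hp.2.2⟩
    refine ⟨_, hq, fun r hr => (hmax hr).trans_eq (hrefl φ ψ), fun h => ?_⟩
    linarith [h.2, sin_neg φ]
  · exact ⟨_, hp, hmax, hout⟩

lemma exp_mul_mul_le_of_isMaxOn {R₁ R₂ ε L K : ℝ} {W : ℝ × ℝ × ℝ → ℝ} {p : ℝ × ℝ × ℝ}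
    (hW : DifferentiableWithinAt ℝ W (milneDomain L) p) (hp : p ∈ milneDomain L)
    (hmax : IsMaxOn (fun q => exp (K * q.1) * W q) (milneDomain L) p)
    (hin : ¬(p.1 = 0 ∧ 0 < sin p.2.1)) (hout : ¬(p.1 = L ∧ sin p.2.1 < 0)) :
    exp (K * p.1) * W p * (1 - K * sin p.2.1)
      ≤ exp (K * p.1) * (transport R₁ R₂ ε L W p + W p) := by
  have hE : HasFDerivAt (fun q : ℝ × ℝ × ℝ => exp (K * q.1))
      (exp (K * p.1) • K • ContinuousLinearMap.fst ℝ ℝ (ℝ × ℝ)) p :=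
    (hasDerivAt_exp _).comp_hasFDerivAt p (hasFDerivAt_fst.const_smul K)
  have hv : -charDir R₁ R₂ ε p ∈ posTangentConeAt (milneDomain L) p :=
    neg_mem_posTangentConeAt_milneDomain hp hin hout _
  have hle := hmax.localize.hasFDerivWithinAt_nonpos
    (hE.hasFDerivWithinAt.mul hW.hasFDerivWithinAt) hv
  have hv₁ : (charDir R₁ R₂ ε p).1 = sin p.2.1 := rfl
  simp only [add_apply, smul_apply, map_neg, ContinuousLinearMap.coe_fst', smul_eq_mul,
    hv₁] at hle
  rw [transport]
  linarith

namespace IsLocalMilneSolution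

variable {R₁ R₂ ε L K M : ℝ} {h : ℝ → ℝ → ℝ} {S W : ℝ × ℝ × ℝ → ℝ}

lemma neg (hsol : IsLocalMilneSolution R₁ R₂ ε L h S W) :
    IsLocalMilneSolution R₁ R₂ ε L (fun φ ψ => -h φ ψ) (fun p => -S p) (fun p => -W p) where
  contDiffOn := hsol.contDiffOn.neg
  eqn p hp := by
    have heqn := hsol.eqn p hp
    simp only [dEta, dPhi, deriv.fun_neg] at heqn ⊢
    linear_combination -heqn
  inflow q hq := by rw [hsol.inflow q hq]
  reflect φ ψ := by rw [hsol.reflect φ ψ]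

lemma exp_mul_abs_transport_add_le (hsol : IsLocalMilneSolution R₁ R₂ ε L h S W) (hL : 0 < L)
    (hF : ContinuousOn (fun p : ℝ × ℝ × ℝ => force R₁ R₂ ε p.1 p.2.2) (milneDomain L))
    (hS : ∀ p ∈ milneDomain L, exp (K * p.1) * |S p| ≤ M) :
    ∀ p ∈ milneDomain L, exp (K * p.1) * |transport R₁ R₂ ε L W p + W p| ≤ M := by
  have hcont : ContinuousOn (fun p => exp (K * p.1) * |transport R₁ R₂ ε L W p + W p|)
      (milneDomain L) :=
    (continuous_exp.comp (continuous_const.mul continuous_fst)).continuousOn.mul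
      ((continuousOn_transport hL hsol.contDiffOn hF).add hsol.contDiffOn.continuousOn).abs
  intro p hp
  have hpc : p ∈ closure (interior (milneDomain L)) := (closure_interior_milneDomain hL).symm ▸ hp
  refine ContinuousWithinAt.closure_le hpc ((hcont p hp).mono interior_subset)
    continuousWithinAt_const fun q hq => ?_
  have hWq : DifferentiableAt ℝ W q :=
    (hsol.contDiffOn.differentiableOn one_ne_zero q (interior_subset hq)).differentiableAt
      (mem_interior_iff_mem_nhds.1 hq)
  rw [transport_eq_of_mem_interior hWq hq, hsol.eqn q hq]
  exact hS q (interior_subset hq)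

theorem exp_mul_le (hsol : IsLocalMilneSolution R₁ R₂ ε L h S W) (hL : 0 < L)
    (hF : ContinuousOn (fun p : ℝ × ℝ × ℝ => force R₁ R₂ ε p.1 p.2.2) (milneDomain L))
    (hK : |K| ≤ 1 / 2) (hM : 0 ≤ M) (hh : ∀ q ∈ inflowSet, |h q.1 q.2| ≤ M)
    (hS : ∀ p ∈ milneDomain L, exp (K * p.1) * |S p| ≤ M) :
    ∀ p ∈ milneDomain L, exp (K * p.1) * W p ≤ 2 * M := by
  have hg : ContinuousOn (fun q : ℝ × ℝ × ℝ => exp (K * q.1) * W q) (milneDomain L) :=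
    (continuous_exp.comp (continuous_const.mul continuous_fst)).continuousOn.mul
      hsol.contDiffOn.continuousOn
  obtain ⟨p, hp, hmax, hout⟩ :=
    exists_isMaxOn_not_outflow hL.le hg fun φ ψ => by simp only [hsol.reflect φ ψ]
  suffices exp (K * p.1) * W p ≤ 2 * M from fun q hq => (hmax hq).trans this
  by_cases hin : p.1 = 0 ∧ 0 < sin p.2.1
  · have hq : (p.2.1, p.2.2) ∈ inflowSet := ⟨hin.2, hp.2.1, hp.2.2⟩
    have hWp : W p = h p.2.1 p.2.2 := by rw [← hsol.inflow _ hq, ← hin.1]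
    rw [hWp, hin.1, mul_zero, exp_zero, one_mul]
    linarith [le_abs_self (h p.2.1 p.2.2), hh _ hq]
  · have hchar := exp_mul_mul_le_of_isMaxOn (R₁ := R₁) (R₂ := R₂) (ε := ε)
      ((hsol.contDiffOn.differentiableOn one_ne_zero) p hp) hp hmax hin hout
    have habs := mul_le_mul_of_nonneg_left
      (le_abs_self (transport R₁ R₂ ε L W p + W p)) (exp_pos (K * p.1)).le
    have hgM := hchar.trans (habs.trans (hsol.exp_mul_abs_transport_add_le hL hF hS p hp))
    have hweight : 1 / 2 ≤ 1 - K * sin p.2.1 := by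
      have := (abs_mul K (sin p.2.1)).trans_le
        (mul_le_of_le_one_right (abs_nonneg K) (abs_sin_le_one _))
      linarith [le_abs_self (K * sin p.2.1)]
    nlinarith

theorem abs_exp_mul_le (hsol : IsLocalMilneSolution R₁ R₂ ε L h S W) (hL : 0 < L)
    (hF : ContinuousOn (fun p : ℝ × ℝ × ℝ => force R₁ R₂ ε p.1 p.2.2) (milneDomain L))
    (hK : |K| ≤ 1 / 2) (hM : 0 ≤ M) (hh : ∀ q ∈ inflowSet, |h q.1 q.2| ≤ M)
    (hS : ∀ p ∈ milneDomain L, exp (K * p.1) * |S p| ≤ M) :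
    ∀ p ∈ milneDomain L, |exp (K * p.1) * W p| ≤ 2 * M := by
  intro p hp
  have hneg := hsol.neg.exp_mul_le hL hF hK hM (by simpa only [abs_neg] using hh)
    (by simpa only [abs_neg] using hS) p hp
  exact abs_le.2 ⟨by linarith, hsol.exp_mul_le hL hF hK hM hh hS p hp⟩

end IsLocalMilneSolution

lemma intervalIntegral.integral_mono_on_of_nonneg {f g : ℝ → ℝ} {a b : ℝ} (hab : a ≤ b)
    (hf : ∀ x ∈ Icc a b, 0 ≤ f x) (hg : IntervalIntegrable g volume a b)
    (hfg : ∀ x ∈ Icc a b, f x ≤ g x) : ∫ x in a..b, f x ≤ ∫ x in a..b, g x := by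
  by_cases hfi : IntervalIntegrable f volume a b
  · exact intervalIntegral.integral_mono_on hab hfi hg hfg
  · rw [intervalIntegral.integral_undef hfi]
    exact intervalIntegral.integral_nonneg hab fun x hx => (hf x hx).trans (hfg x hx)

lemma integral_exp_neg_mul_le {K : ℝ} (hK : 0 < K) (L : ℝ) :
    ∫ η in (0 : ℝ)..L, exp (-(K * η)) ≤ 1 / K := by
  have h := intervalIntegral.integral_comp_mul_left (a := 0) (b := L) exp (neg_ne_zero.2 hK.ne')
  simp only [neg_mul, mul_zero, integral_exp, exp_zero, smul_eq_mul] at h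
  rw [h, inv_neg, neg_mul, ← mul_neg, neg_sub, inv_mul_eq_div]
  exact div_le_div_of_nonneg_right (by linarith [exp_pos (-(K * L))]) hK.le

lemma linfNorm_le {L B : ℝ} (hB : 0 ≤ B) {g : ℝ × ℝ × ℝ → ℝ}
    (hg : ∀ p ∈ milneDomain L, |g p| ≤ B) : linfNorm L g ≤ B :=
  Real.iSup_le (fun p => Real.iSup_le (hg p) hB) hB

lemma l2Norm_le_of_abs_le_exp {L K B : ℝ} (hL : 0 ≤ L) (hK : 0 < K) {g : ℝ × ℝ × ℝ → ℝ}
    (hg : ∀ p ∈ milneDomain L, |g p| ≤ B * exp (-(K * p.1))) :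
    l2Norm L g ≤ sqrt (2 * π * B ^ 2 / K) := by
  have hπ := pi_pos
  have hnonneg : ∀ η ψ, ∀ φ ∈ Icc (-(π / 2)) (π / 2), 0 ≤ g (η, φ, ψ) ^ 2 * cos φ :=
    fun _ _ φ hφ => mul_nonneg (sq_nonneg _) (cos_nonneg_of_mem_Icc hφ)
  have hφ : ∀ η ∈ Icc 0 L, ∀ ψ ∈ Icc (-π) π,
      ∫ φ in (-(π / 2))..(π / 2), g (η, φ, ψ) ^ 2 * cos φ
        ≤ 2 * B ^ 2 * exp (-(2 * K * η)) := by
    intro η hη ψ hψ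
    calc ∫ φ in (-(π / 2))..(π / 2), g (η, φ, ψ) ^ 2 * cos φ
        ≤ ∫ φ in (-(π / 2))..(π / 2), (B * exp (-(K * η))) ^ 2 * cos φ := by
          refine intervalIntegral.integral_mono_on_of_nonneg (by linarith) (hnonneg η ψ)
            (Continuous.intervalIntegrable (by fun_prop) _ _) fun φ hφ => ?_
          refine mul_le_mul_of_nonneg_right ?_ (cos_nonneg_of_mem_Icc hφ)
          exact (sq_abs _).symm.trans_le
            (pow_le_pow_left₀ (abs_nonneg _) (hg _ ⟨hη, hφ, hψ⟩) 2)
      _ = 2 * B ^ 2 * exp (-(2 * K * η)) := by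
          rw [intervalIntegral.integral_const_mul, integral_cos, sin_neg, sin_pi_div_two,
            mul_pow, ← exp_nat_mul]
          ring_nf
  have hψ : ∀ η ∈ Icc 0 L,
      ∫ ψ in (-π)..π, ∫ φ in (-(π / 2))..(π / 2), g (η, φ, ψ) ^ 2 * cos φ
        ≤ 4 * π * B ^ 2 * exp (-(2 * K * η)) := by
    intro η hη
    calc ∫ ψ in (-π)..π, ∫ φ in (-(π / 2))..(π / 2), g (η, φ, ψ) ^ 2 * cos φ
        ≤ ∫ _ in (-π)..π, 2 * B ^ 2 * exp (-(2 * K * η)) :=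
          intervalIntegral.integral_mono_on_of_nonneg (by linarith)
            (fun ψ _ => intervalIntegral.integral_nonneg (by linarith) (hnonneg η ψ))
            intervalIntegrable_const (hφ η hη)
      _ = 4 * π * B ^ 2 * exp (-(2 * K * η)) := by
          rw [intervalIntegral.integral_const, smul_eq_mul]
          ring
  have hη : ∫ η in (0 : ℝ)..L, ∫ ψ in (-π)..π, ∫ φ in (-(π / 2))..(π / 2),
      g (η, φ, ψ) ^ 2 * cos φ ≤ 2 * π * B ^ 2 / K := by
    calc _ ≤ ∫ η in (0 : ℝ)..L, 4 * π * B ^ 2 * exp (-(2 * K * η)) :=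
          intervalIntegral.integral_mono_on_of_nonneg hL
            (fun η _ => intervalIntegral.integral_nonneg (by linarith) fun ψ _ =>
              intervalIntegral.integral_nonneg (by linarith) (hnonneg η ψ))
            (Continuous.intervalIntegrable (by fun_prop) _ _) hψ
      _ ≤ 4 * π * B ^ 2 * (1 / (2 * K)) := by
          rw [intervalIntegral.integral_const_mul]
          exact mul_le_mul_of_nonneg_left (integral_exp_neg_mul_le (by positivity) L)
            (by positivity)
      _ = 2 * π * B ^ 2 / K := by field_simp; ring
  exact sqrt_le_sqrt hη

lemma abs_exp_half_mul_le {K η w B : ℝ} (h : |exp (K * η) * w| ≤ B) :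
    |exp (K / 2 * η) * w| ≤ B * exp (-(K / 2 * η)) := by
  have hsplit : exp (K / 2 * η) * w = exp (-(K / 2 * η)) * (exp (K * η) * w) := by
    rw [← mul_assoc, ← exp_add]
    ring_nf
  rw [hsplit, abs_mul, abs_exp, mul_comm B]
  exact mul_le_mul_of_nonneg_left h (exp_pos _).le

lemma mul_layerL_le {ε n R : ℝ} (hε : 0 < ε) (hn : n < 1) (hR : 0 ≤ R)
    (hεR : ε ≤ R ^ (1 - n)⁻¹) : ε * layerL ε n ≤ R := by
  have h1n : 0 < 1 - n := by linarith
  calc ε * layerL ε n = ε ^ (1 - n) := by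
        rw [layerL, sub_eq_add_neg, rpow_add hε, rpow_one]
    _ ≤ (R ^ (1 - n)⁻¹) ^ (1 - n) := rpow_le_rpow hε.le hεR h1n.le
    _ = R := by rw [← rpow_mul hR, inv_mul_cancel₀ h1n.ne', rpow_one]

/-- Theorem "Milne theorem 2′": decay for the local ε-Milne problem
(the equation without the nonlocal average term). -/
theorem local_milne_decay (R₁ R₂ n K M : ℝ) (hR₁ : 0 < R₁) (hR₂ : 0 < R₂)
    (hn : n ∈ Ioo (0 : ℝ) (1 / 2)) (hK : 0 < K) (hM : 0 < M) :
    ∃ ε₀ ∈ Ioo (0 : ℝ) 1, ∃ K₀ ∈ Ioc (0 : ℝ) (min K (1 / 2)), ∃ C > (0 : ℝ),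
      ∀ ε ∈ Ioc (0 : ℝ) ε₀, ∀ h : ℝ → ℝ → ℝ, ∀ S W : ℝ × ℝ × ℝ → ℝ,
        ContDiffOn ℝ 1 W (milneDomain (layerL ε n)) →
        (∀ p ∈ interior (milneDomain (layerL ε n)),
          Real.sin p.2.1 * dEta W p
            + force R₁ R₂ ε p.1 p.2.2 * Real.cos p.2.1 * dPhi W p + W p = S p) →
        (∀ q ∈ inflowSet, W (0, q.1, q.2) = h q.1 q.2) →
        (∀ φ ψ : ℝ, W (layerL ε n, φ, ψ) = W (layerL ε n, -φ, ψ)) →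
        (∀ q ∈ inflowSet, |h q.1 q.2| ≤ M) →
        (∀ p ∈ milneDomain (layerL ε n), Real.exp (K * p.1) * |S p| ≤ M) →
        l2Norm (layerL ε n) (fun p => Real.exp (K₀ * p.1) * W p)
          + linfNorm (layerL ε n) (fun p => Real.exp (K₀ * p.1) * W p) ≤ C := by
  set K₁ := min K (1 / 2)
  have hK₁ : 0 < K₁ := lt_min hK (by norm_num)
  have hR : 0 < min R₁ R₂ / 2 := by positivity
  refine ⟨min (1 / 2) ((min R₁ R₂ / 2) ^ (1 - n)⁻¹),
    ⟨lt_min (by norm_num) (rpow_pos_of_pos hR _), (min_le_left _ _).trans_lt (by norm_num)⟩,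
    K₁ / 2, ⟨half_pos hK₁, half_le_self hK₁.le⟩,
    sqrt (2 * π * (2 * M) ^ 2 / (K₁ / 2)) + 2 * M, by positivity, ?_⟩
  intro ε hε h S W hW heqn hin hrefl hh hS
  have hL : 0 < layerL ε n := rpow_pos_of_pos hε.1 _
  have hεL := mul_layerL_le hε.1 (by linarith [hn.2]) hR.le (hε.2.trans (min_le_right _ _))
  have hF := continuousOn_force (R₁ := R₁) (R₂ := R₂) (L := layerL ε n) hε.1.le
    (by linarith [min_le_left R₁ R₂]) (by linarith [min_le_right R₁ R₂])
  have hS₁ : ∀ p ∈ milneDomain (layerL ε n), exp (K₁ * p.1) * |S p| ≤ M := fun p hp =>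
    (mul_le_mul_of_nonneg_right (exp_le_exp.2 (mul_le_mul_of_nonneg_right (min_le_left _ _)
      hp.1.1)) (abs_nonneg _)).trans (hS p hp)
  have hbound := IsLocalMilneSolution.abs_exp_mul_le ⟨hW, heqn, hin, hrefl⟩ hL hF
    (abs_le.2 ⟨by linarith, min_le_right _ _⟩) hM.le hh hS₁
  have hdecay : ∀ p ∈ milneDomain (layerL ε n),
      |exp (K₁ / 2 * p.1) * W p| ≤ 2 * M * exp (-(K₁ / 2 * p.1)) := fun p hp =>
    abs_exp_half_mul_le (hbound p hp)
  have hl2 := l2Norm_le_of_abs_le_exp hL.le (half_pos hK₁) hdecay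
  have hlinf := linfNorm_le (by positivity) fun p hp => (hdecay p hp).trans
    (mul_le_of_le_one_right (by positivity) (exp_le_one_iff.2 (by nlinarith [hp.1.1])))
  linarith

end MilneStmt
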